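/- arXiv:2111.06270 — 3 statements merged into one kernel-verified Lean document; each statement's English description precedes it below -/
import Mathlib

section
/- Let f = (f₁₁,f₁₂,f₂₁,f₂₂) ∈ ℝ⁴ satisfy p(f) < 0 and m(f) > 2, where p(f) := f₁₁f₁₂f₂₁f₂₂ and m(f) := (min_{i,j} |f_{ij}|) · (Σ_{i,j} |f_{ij}|⁻¹). Then the support function of Q at f satisfies sup { f·c : c ∈ Q } = √( k(f) / p(f) ), where k(f) := (f₁₁f₂₂ − f₁₂f₂₁)(f₁₁f₁₂ − f₂₁f₂₂)(f₁₁f₂₁ − f₁₂f₂₂) and f·c denotes Σ_{i,j} f_{ij} c_{ij}. -/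
def Cmat (c : Fin 4 → ℝ) (u v : ℝ) : Matrix (Fin 4) (Fin 4) ℝ :=
  !![1, u, c 0, c 1;
     u, 1, c 2, c 3;
     c 0, c 2, 1, v;
     c 1, c 3, v, 1]

def Qbody : Set (Fin 4 → ℝ) := {c | ∃ u v : ℝ, (Cmat c u v).PosSemidef}

/-- `p(f) = f₁₁ f₁₂ f₂₁ f₂₂`. -/
def ppoly (f : Fin 4 → ℝ) : ℝ := f 0 * f 1 * f 2 * f 3

/-- `k(f) = (f₁₁f₂₂ − f₁₂f₂₁)(f₁₁f₁₂ − f₂₁f₂₂)(f₁₁f₂₁ − f₁₂f₂₂)`. -/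
def kpoly (f : Fin 4 → ℝ) : ℝ :=
  (f 0 * f 3 - f 1 * f 2) * (f 0 * f 1 - f 2 * f 3) * (f 0 * f 2 - f 1 * f 3)

/-- `m(f) = (min |f_ij|) · Σ |f_ij|⁻¹`. -/
noncomputable def mfun (f : Fin 4 → ℝ) : ℝ :=
  (min (min |f 0| |f 1|) (min |f 2| |f 3|)) * (∑ i, |f i|⁻¹)

/-!
Write `f = (f₁₁, f₁₂, f₂₁, f₂₂)` and `c_ij = ⟪a_i, b_j⟫`: a Gram factorisation of `C(c, u, v)` shows
that the points of `Q` are exactly such correlations of unit vectors `a₁, a₂, b₁, b₂`. By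
Cauchy–Schwarz, `f · c ≤ x + y` with `x = ‖f₁₁ a₁ + f₂₁ a₂‖` and `y = ‖f₁₂ a₁ + f₂₂ a₂‖`, whose
squares depend only on `t = ⟪a₁, a₂⟫`. The identity `(x + y)² p = k + (f₁₂ f₂₂ x + f₁₁ f₂₁ y)²`
together with `p < 0` gives `(x + y)² ≤ k / p`. Equality holds when the `b_j` are the normalised
vectors and `t` makes the square vanish, i.e. `(f₁₂ f₂₂ x)² = (f₁₁ f₂₁ y)²`. This equation is linear
in `t`, and `m(f) > 2`, which says that the `|f_ij|⁻¹` are the sides of a quadrilateral, is what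
puts its root in `(-1, 1)`.
-/

open Matrix
open scoped InnerProductSpace ComplexOrder

open scoped MatrixOrder in
theorem Matrix.PosSemidef.exists_eq_gram {𝕜 n : Type*} [RCLike 𝕜] [Fintype n] [DecidableEq n]
    {A : Matrix n n 𝕜} (hA : A.PosSemidef) : ∃ v : n → EuclideanSpace 𝕜 n, A = gram 𝕜 v := by
  obtain ⟨B, rfl⟩ := CStarAlgebra.nonneg_iff_eq_star_mul_self.mp hA.nonneg
  refine ⟨fun j ↦ WithLp.toLp 2 fun k ↦ B k j, ?_⟩
  ext i j
  simp [mul_apply, PiLp.inner_apply, mul_comm]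

section Correlation

variable {E : Type*} [NormedAddCommGroup E] [InnerProductSpace ℝ E]

def correlation (v : Fin 4 → E) : Fin 4 → ℝ :=
  ![⟪v 0, v 2⟫_ℝ, ⟪v 0, v 3⟫_ℝ, ⟪v 1, v 2⟫_ℝ, ⟪v 1, v 3⟫_ℝ]

theorem cmat_correlation {v : Fin 4 → E} (hv : ∀ i, ‖v i‖ = 1) :
    Cmat (correlation v) ⟪v 0, v 1⟫_ℝ ⟪v 2, v 3⟫_ℝ = gram ℝ v := by
  ext i j
  fin_cases i <;> fin_cases j <;> simp [Cmat, correlation, hv]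
  all_goals exact real_inner_comm _ _

theorem correlation_mem_Qbody {v : Fin 4 → E} (hv : ∀ i, ‖v i‖ = 1) : correlation v ∈ Qbody :=
  ⟨_, _, cmat_correlation hv ▸ posSemidef_gram ℝ v⟩

theorem sum_mul_correlation (f : Fin 4 → ℝ) (v : Fin 4 → E) :
    ∑ i, f i * correlation v i =
      ⟪f 0 • v 0 + f 2 • v 1, v 2⟫_ℝ + ⟪f 1 • v 0 + f 3 • v 1, v 3⟫_ℝ := by
  simp [Fin.sum_univ_four, correlation, inner_add_left, real_inner_smul_left]
  ring

theorem norm_smul_add_smul_sq (a c : ℝ) {x y : E} (hx : ‖x‖ = 1) (hy : ‖y‖ = 1) :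
    ‖a • x + c • y‖ ^ 2 = a ^ 2 + c ^ 2 + 2 * a * c * ⟪x, y⟫_ℝ := by
  rw [norm_add_sq_real, norm_smul, norm_smul, real_inner_smul_left, real_inner_smul_right, hx, hy]
  simp
  ring

end Correlation

theorem exists_correlation_eq_of_mem_Qbody {c : Fin 4 → ℝ} (hc : c ∈ Qbody) :
    ∃ v : Fin 4 → EuclideanSpace ℝ (Fin 4), (∀ i, ‖v i‖ = 1) ∧ correlation v = c := by
  obtain ⟨u, w, hC⟩ := hc
  obtain ⟨v, hv⟩ := hC.exists_eq_gram
  have entry (i j : Fin 4) : ⟪v i, v j⟫_ℝ = Cmat c u w i j := by rw [hv]; rfl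
  refine ⟨v, fun i ↦ ?_, ?_⟩
  · have h := entry i i
    rw [real_inner_self_eq_norm_sq] at h
    have : ‖v i‖ ^ 2 = 1 := by fin_cases i <;> simpa [Cmat] using h
    exact (pow_eq_one_iff_of_nonneg (norm_nonneg _) two_ne_zero).mp this
  · ext i
    fin_cases i <;> simp [correlation, entry, Cmat]

theorem exists_unit_inner_eq {t : ℝ} (ht : t ^ 2 ≤ 1) :
    ∃ x y : EuclideanSpace ℝ (Fin 2), ‖x‖ = 1 ∧ ‖y‖ = 1 ∧ ⟪x, y⟫_ℝ = t := by
  refine ⟨!₂[1, 0], !₂[t, √(1 - t ^ 2)], ?_, ?_, ?_⟩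
  · simp [EuclideanSpace.norm_eq]
  · simp [EuclideanSpace.norm_eq, Real.sq_sqrt (sub_nonneg.mpr ht)]
  · simp [PiLp.inner_apply]

theorem add_eq_zero_of_sq_eq_of_mul_neg {p q : ℝ} (h : p ^ 2 = q ^ 2) (hpq : p * q < 0) :
    p + q = 0 := by
  rcases sq_eq_sq_iff_eq_or_eq_neg.mp h with rfl | rfl
  · nlinarith [mul_self_nonneg p]
  · ring

theorem sq_add_sq_add_mul_pos (a : ℝ) {c t : ℝ} (hc : c ≠ 0) (ht : t ^ 2 < 1) :
    0 < a ^ 2 + c ^ 2 + 2 * a * c * t := by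
  have h : 0 < c ^ 2 * (1 - t ^ 2) := mul_pos (by positivity) (by linarith)
  nlinarith [sq_nonneg (a + c * t)]

theorem sq_add_lt_sq_add {x y z w : ℝ} (hxy : 0 ≤ x * y) (hzw : z * w ≤ 0)
    (hz : |z| < |x| + |y| + |w|) (hw : |w| < |x| + |y| + |z|) : (z + w) ^ 2 < (x + y) ^ 2 := by
  have hx : |x| * |y| = x * y := by rw [← abs_mul, abs_of_nonneg hxy]
  have hz' : |z| * |w| = -(z * w) := by rw [← abs_mul, abs_of_nonpos hzw]
  have key : (x + y) ^ 2 - (z + w) ^ 2 = (|x| + |y| - |z| + |w|) * (|x| + |y| + |z| - |w|) := by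
    linear_combination -(sq_abs x) - sq_abs y + sq_abs z + sq_abs w - 2 * hx - 2 * hz'
  exact sub_pos.mp (key ▸ mul_pos (by linarith) (by linarith))

theorem mul_neg_of_quadrilateral {α β γ δ : ℝ} (h : α * γ * (β * δ) < 0)
    (hα : |α| < |β| + |γ| + |δ|) (hβ : |β| < |α| + |γ| + |δ|)
    (hγ : |γ| < |α| + |β| + |δ|) (hδ : |δ| < |α| + |β| + |γ|) :
    ((β + δ) ^ 2 - (α + γ) ^ 2) * ((β - δ) ^ 2 - (α - γ) ^ 2) < 0 := by
  simp only [sub_eq_add_neg β, sub_eq_add_neg α]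
  rcases (left_ne_zero_of_mul h.ne).lt_or_gt with hαγ | hαγ
  · have hβδ : 0 < β * δ := pos_of_mul_neg_right h hαγ.le
    refine mul_neg_of_pos_of_neg (sub_pos.mpr ?_) (sub_neg.mpr ?_)
    · exact sq_add_lt_sq_add hβδ.le hαγ.le (by linarith) (by linarith)
    · refine sq_add_lt_sq_add (by linarith [neg_mul_neg α γ]) (by linarith [neg_mul_neg β δ])
        ?_ ?_ <;> simp only [abs_neg] <;> linarith
  · have hβδ : β * δ < 0 := neg_of_mul_neg_right h hαγ.le
    refine mul_neg_of_neg_of_pos (sub_neg.mpr ?_) (sub_pos.mpr ?_)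
    · exact sq_add_lt_sq_add hαγ.le hβδ.le (by linarith) (by linarith)
    · refine sq_add_lt_sq_add (by linarith [neg_mul_neg β δ]) (by linarith [neg_mul_neg α γ])
        ?_ ?_ <;> simp only [abs_neg] <;> linarith

theorem sq_add_mul_ppoly (f : Fin 4 → ℝ) {x y u : ℝ}
    (hx : x ^ 2 = f 0 ^ 2 + f 2 ^ 2 + 2 * f 0 * f 2 * u)
    (hy : y ^ 2 = f 1 ^ 2 + f 3 ^ 2 + 2 * f 1 * f 3 * u) :
    (x + y) ^ 2 * ppoly f = kpoly f + (f 1 * f 3 * x + f 0 * f 2 * y) ^ 2 := by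
  unfold ppoly kpoly
  linear_combination (-(f 1 * f 3) * (f 1 * f 3 - f 0 * f 2)) * hx
    + (-(f 0 * f 2) * (f 0 * f 2 - f 1 * f 3)) * hy

theorem add_le_sqrt_kpoly_div_ppoly {f : Fin 4 → ℝ} (hp : ppoly f < 0) {x y u : ℝ}
    (hx : x ^ 2 = f 0 ^ 2 + f 2 ^ 2 + 2 * f 0 * f 2 * u)
    (hy : y ^ 2 = f 1 ^ 2 + f 3 ^ 2 + 2 * f 1 * f 3 * u) :
    x + y ≤ √(kpoly f / ppoly f) := by
  refine (le_abs_self _).trans (Real.abs_le_sqrt ?_)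
  rw [le_div_iff_of_neg hp, sq_add_mul_ppoly f hx hy]
  exact le_add_of_nonneg_right (sq_nonneg _)

theorem add_eq_sqrt_kpoly_div_ppoly {f : Fin 4 → ℝ} (hp : ppoly f ≠ 0) {x y u : ℝ}
    (hxy : 0 ≤ x + y)
    (hx : x ^ 2 = f 0 ^ 2 + f 2 ^ 2 + 2 * f 0 * f 2 * u)
    (hy : y ^ 2 = f 1 ^ 2 + f 3 ^ 2 + 2 * f 1 * f 3 * u)
    (hopt : f 1 * f 3 * x + f 0 * f 2 * y = 0) :
    x + y = √(kpoly f / ppoly f) := by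
  have h : (x + y) ^ 2 = kpoly f / ppoly f :=
    (eq_div_iff hp).mpr (by rw [sq_add_mul_ppoly f hx hy, hopt]; ring)
  rw [← h, Real.sqrt_sq hxy]

theorem two_mul_inv_abs_lt_sum_inv_abs {f : Fin 4 → ℝ} (hm : 2 < mfun f) (i : Fin 4) :
    2 * |f i|⁻¹ < ∑ j, |f j|⁻¹ := by
  unfold mfun at hm
  set μ := min (min |f 0| |f 1|) (min |f 2| |f 3|)
  have hμi : μ ≤ |f i| := by fin_cases i <;> simp [μ]
  have hS : 0 ≤ ∑ j, |f j|⁻¹ := by positivity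
  have hμ : 0 < μ := by
    by_contra! h
    nlinarith [mul_nonpos_of_nonpos_of_nonneg h hS]
  calc 2 * |f i|⁻¹ ≤ 2 * μ⁻¹ := by gcongr
    _ < ∑ j, |f j|⁻¹ := by
      rw [← div_eq_mul_inv, div_lt_iff₀ hμ]
      linarith

/-- In the reciprocals `α, β, γ, δ` of the `f i` the equation reads
`α² + γ² + 2αγt = β² + δ² + 2βδt`, and the difference of the squares of the numerator and
denominator of its root factors as in `mul_neg_of_quadrilateral`. -/
theorem exists_balanced_cos {f : Fin 4 → ℝ} (hp : ppoly f < 0) (hm : 2 < mfun f) :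
    ∃ t : ℝ, t ^ 2 < 1 ∧
      (f 1 * f 3) ^ 2 * (f 0 ^ 2 + f 2 ^ 2 + 2 * f 0 * f 2 * t) =
        (f 0 * f 2) ^ 2 * (f 1 ^ 2 + f 3 ^ 2 + 2 * f 1 * f 3 * t) := by
  have hpoly := two_mul_inv_abs_lt_sum_inv_abs hm
  simp only [Fin.sum_univ_four, ← abs_inv] at hpoly
  obtain ⟨h0, h1, h2, h3⟩ : f 0 ≠ 0 ∧ f 1 ≠ 0 ∧ f 2 ≠ 0 ∧ f 3 ≠ 0 := by
    simpa [ppoly, or_assoc] using hp.ne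
  set α := (f 0)⁻¹
  set β := (f 1)⁻¹
  set γ := (f 2)⁻¹
  set δ := (f 3)⁻¹
  have hsign : α * γ * (β * δ) < 0 := by
    have : α * γ * (β * δ) = (ppoly f)⁻¹ := by simp only [ppoly, α, β, γ, δ, mul_inv]; ring
    exact this ▸ inv_lt_zero.mpr hp
  have sub_ne_zero_of_mul_neg {p q : ℝ} (h : p * q < 0) : p - q ≠ 0 := fun e ↦ by
    rw [sub_eq_zero.mp e] at h
    exact (mul_self_nonneg q).not_gt h
  have hden := sub_ne_zero_of_mul_neg hsign
  have hden' := sub_ne_zero_of_mul_neg (show f 1 * f 3 * (f 0 * f 2) < 0 by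
    unfold ppoly at hp; linarith)
  refine ⟨(β ^ 2 + δ ^ 2 - α ^ 2 - γ ^ 2) / (2 * (α * γ - β * δ)), ?_, ?_⟩
  · rw [div_pow, div_lt_one (by positivity)]
    nlinarith [mul_neg_of_quadrilateral hsign (by linarith [hpoly 0]) (by linarith [hpoly 1])
      (by linarith [hpoly 2]) (by linarith [hpoly 3])]
  · simp only [α, β, γ, δ]
    field_simp
    ring

theorem sum_mul_le_sqrt_of_mem_Qbody {f : Fin 4 → ℝ} (hp : ppoly f < 0) {c : Fin 4 → ℝ}
    (hc : c ∈ Qbody) : ∑ i, f i * c i ≤ √(kpoly f / ppoly f) := by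
  obtain ⟨v, hv, rfl⟩ := exists_correlation_eq_of_mem_Qbody hc
  have inner_le {w : EuclideanSpace ℝ (Fin 4)} (i : Fin 4) : ⟪w, v i⟫_ℝ ≤ ‖w‖ := by
    simpa [hv i] using real_inner_le_norm w (v i)
  calc ∑ i, f i * correlation v i
      = ⟪f 0 • v 0 + f 2 • v 1, v 2⟫_ℝ + ⟪f 1 • v 0 + f 3 • v 1, v 3⟫_ℝ :=
        sum_mul_correlation f v
    _ ≤ ‖f 0 • v 0 + f 2 • v 1‖ + ‖f 1 • v 0 + f 3 • v 1‖ := add_le_add (inner_le 2) (inner_le 3)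
    _ ≤ √(kpoly f / ppoly f) := add_le_sqrt_kpoly_div_ppoly hp
        (norm_smul_add_smul_sq _ _ (hv 0) (hv 1)) (norm_smul_add_smul_sq _ _ (hv 0) (hv 1))

theorem exists_mem_Qbody_sum_mul_eq_sqrt {f : Fin 4 → ℝ} (hp : ppoly f < 0) (hm : 2 < mfun f) :
    ∃ c ∈ Qbody, ∑ i, f i * c i = √(kpoly f / ppoly f) := by
  obtain ⟨t, ht, hbal⟩ := exists_balanced_cos hp hm
  obtain ⟨e, e', he, he', hee'⟩ := exists_unit_inner_eq ht.le
  have hf2 : f 2 ≠ 0 := by rintro h; simp [ppoly, h] at hp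
  have hf3 : f 3 ≠ 0 := by rintro h; simp [ppoly, h] at hp
  set w₁ := f 0 • e + f 2 • e'
  set w₂ := f 1 • e + f 3 • e'
  have hx : ‖w₁‖ ^ 2 = f 0 ^ 2 + f 2 ^ 2 + 2 * f 0 * f 2 * t :=
    hee' ▸ norm_smul_add_smul_sq _ _ he he'
  have hy : ‖w₂‖ ^ 2 = f 1 ^ 2 + f 3 ^ 2 + 2 * f 1 * f 3 * t :=
    hee' ▸ norm_smul_add_smul_sq _ _ he he'
  have hx₀ : 0 < ‖w₁‖ := by nlinarith [norm_nonneg w₁, sq_add_sq_add_mul_pos (f 0) hf2 ht]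
  have hy₀ : 0 < ‖w₂‖ := by nlinarith [norm_nonneg w₂, sq_add_sq_add_mul_pos (f 1) hf3 ht]
  have hopt : f 1 * f 3 * ‖w₁‖ + f 0 * f 2 * ‖w₂‖ = 0 := by
    refine add_eq_zero_of_sq_eq_of_mul_neg
      (by rw [mul_pow (f 1 * f 3), mul_pow (f 0 * f 2), hx, hy, hbal]) ?_
    have h : f 1 * f 3 * ‖w₁‖ * (f 0 * f 2 * ‖w₂‖) = ppoly f * (‖w₁‖ * ‖w₂‖) := by
      unfold ppoly; ring
    exact h ▸ mul_neg_of_neg_of_pos hp (mul_pos hx₀ hy₀)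
  set v : Fin 4 → EuclideanSpace ℝ (Fin 2) := ![e, e', ‖w₁‖⁻¹ • w₁, ‖w₂‖⁻¹ • w₂]
  have hv : ∀ i, ‖v i‖ = 1 := by
    intro i
    fin_cases i <;> simp [v, he, he', norm_smul, hx₀.ne', hy₀.ne']
  refine ⟨correlation v, correlation_mem_Qbody hv, ?_⟩
  rw [sum_mul_correlation, ← add_eq_sqrt_kpoly_div_ppoly hp.ne (by positivity) hx hy hopt]
  have inner_normalize {w : EuclideanSpace ℝ (Fin 2)} (hw : 0 < ‖w‖) :
      ⟪w, ‖w‖⁻¹ • w⟫_ℝ = ‖w‖ := by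
    rw [real_inner_smul_right, real_inner_self_eq_norm_sq]
    field_simp
  exact congrArg₂ (· + ·) (inner_normalize hx₀) (inner_normalize hy₀)

theorem stmt4 (f : Fin 4 → ℝ) (hp : ppoly f < 0) (hm : 2 < mfun f) :
    sSup ((fun c : Fin 4 → ℝ => ∑ i, f i * c i) '' Qbody)
      = Real.sqrt (kpoly f / ppoly f) := by
  obtain ⟨c, hc, hval⟩ := exists_mem_Qbody_sum_mul_eq_sqrt hp hm
  refine IsGreatest.csSup_eq ⟨⟨c, hc, hval⟩, ?_⟩
  rintro _ ⟨c', hc', rfl⟩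
  exact sum_mul_le_sqrt_of_mem_Qbody hp hc'
end

section
/- Let α, β, γ, δ ∈ ℝ satisfy α+β+γ+δ = 0 and sin α · sin β · sin γ · sin δ < 0, set c := (cos α, cos β, cos γ, cos δ), let K := cot α + cot β + cot γ + cot δ, and define f := (1/K)·(1/sin α, 1/sin β, 1/sin γ, 1/sin δ) ∈ ℝ⁴. Then f·c′ ≤ 1 for all c′ ∈ Q, with equality if and only if c′ = c; moreover f is the unique vector in ℝ⁴ with this property (so c is an exposed extreme point of Q with unique exposing functional f). -/
open Real Matrix

/-!
When `α + β + γ + δ = 0`, the point `c` is the Gram data of the unit vectors `x₁ = e(0)`,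
`x₂ = e(α + γ)`, `y₁ = e(α)`, `y₂ = e(-β)`, where `e(t) = (cos t, sin t)`, so `c ∈ Q`. The linear relations
`sin (α + β) x₁ = sin β y₁ + sin α y₂` and `sin (α + β) x₂ = -sin δ y₁ - sin γ y₂` give two vectors
`r`, `s` in the kernel of this Gram matrix.

For any `C = C(c', u, v) ⪰ 0` the combination `sin γ sin δ · rᵀ C r - sin α sin β · sᵀ C s` does
not involve `u, v` and is affine in `c'`; since it vanishes at `c` it equals
`2 sin (α + β) K ∏ sin · (1 - f · c')`. Comparing constant terms shows that the two weights, scaled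
by `K sin (α + β)`, have opposite signs. Hence `f · c' ≤ 1`, and equality forces `C r = C s = 0`,
which determines `c'`.

Conversely, if `f'` exposes `c = cos ∘ θ`, then `t ↦ f' · cos (θ + t w)` is maximal at `0` for every
direction `w` with `∑ w = 0`, so `f'ᵢ sin θᵢ` is constant, and `f' · c = 1` fixes the constant to
`1 / K`.
-/

def ExposesPoint {ι : Type*} [Fintype ι] (Q : Set (ι → ℝ)) (f c : ι → ℝ) : Prop :=
  (∀ c' ∈ Q, ∑ i, f i * c' i ≤ 1) ∧ ∀ c' ∈ Q, (∑ i, f i * c' i = 1 ↔ c' = c)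

noncomputable def cosGramFactor (α β γ : ℝ) : Matrix (Fin 2) (Fin 4) ℝ :=
  !![1, cos (α + γ), cos α, cos β;
     0, sin (α + γ), sin α, -sin β]

section
variable {α β γ δ : ℝ}

lemma Cmat_cos_eq_transpose_mul (h : α + β + γ + δ = 0) :
    Cmat ![cos α, cos β, cos γ, cos δ] (cos (α + γ)) (cos (α + β)) =
      (cosGramFactor α β γ)ᵀ * cosGramFactor α β γ := by
  obtain rfl : δ = -(α + β + γ) := by linarith
  ext i j
  fin_cases i <;> fin_cases j <;>
    simp [Cmat, cosGramFactor, mul_apply, Fin.sum_univ_two, cos_add, sin_add] <;>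
    ring_nf <;> simp only [sin_sq] <;> ring

lemma cos_mem_Qbody (h : α + β + γ + δ = 0) : ![cos α, cos β, cos γ, cos δ] ∈ Qbody :=
  ⟨_, _, Cmat_cos_eq_transpose_mul h ▸ posSemidef_conjTranspose_mul_self _⟩

lemma cosGramFactor_mulVec_left :
    cosGramFactor α β γ *ᵥ ![sin (α + β), 0, -sin β, -sin α] = 0 := by
  ext i
  fin_cases i <;> simp [cosGramFactor, mulVec, dotProduct, Fin.sum_univ_four, sin_add] <;> ring

lemma cosGramFactor_mulVec_right (h : α + β + γ + δ = 0) :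
    cosGramFactor α β γ *ᵥ ![0, sin (α + β), sin δ, sin γ] = 0 := by
  obtain rfl : δ = -(α + β + γ) := by linarith
  ext i
  fin_cases i <;> simp [cosGramFactor, mulVec, dotProduct, Fin.sum_univ_four, sin_add, cos_add] <;>
    ring_nf <;> simp only [sin_sq] <;> ring

lemma sin_add_ne_zero (h : α + β + γ + δ = 0) (hneg : sin α * sin β * sin γ * sin δ < 0) :
    sin (α + β) ≠ 0 := by
  intro hS
  have hb : sin β = -cos (α + β) * sin α := by
    have := sin_sub (α + β) α
    rw [add_sub_cancel_left, hS] at this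
    linear_combination this
  have hd : sin δ = -cos (α + β) * sin γ := by
    rw [show δ = -(α + β + γ) by linarith, sin_neg, sin_add, hS]
    ring
  rw [hb, hd] at hneg
  nlinarith [sq_nonneg (cos (α + β) * sin α * sin γ)]
end

lemma Cmat_quadForm_combination (c : Fin 4 → ℝ) (u v a b g d S : ℝ) :
    g * d * (![S, 0, -b, -a] ⬝ᵥ Cmat c u v *ᵥ ![S, 0, -b, -a]) -
      a * b * (![0, S, d, g] ⬝ᵥ Cmat c u v *ᵥ ![0, S, d, g]) =
    g * d * (S ^ 2 + a ^ 2 + b ^ 2) - a * b * (S ^ 2 + g ^ 2 + d ^ 2) -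
      2 * S * (b * g * d * c 0 + a * g * d * c 1 + a * b * d * c 2 + a * b * g * c 3) := by
  simp [Cmat, dotProduct, mulVec, Fin.sum_univ_four]
  ring

lemma eq_of_Cmat_mulVec_eq_zero {c c' : Fin 4 → ℝ} {u v u' v' a b g d S : ℝ}
    (ha : a ≠ 0) (hb : b ≠ 0) (hS : S ≠ 0)
    (hr : Cmat c u v *ᵥ ![S, 0, -b, -a] = 0) (hr' : Cmat c' u' v' *ᵥ ![S, 0, -b, -a] = 0)
    (hs : Cmat c u v *ᵥ ![0, S, d, g] = 0) (hs' : Cmat c' u' v' *ᵥ ![0, S, d, g] = 0) :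
    c' = c := by
  obtain ⟨r0, r2, r3⟩ : _ ∧ _ ∧ _ := ⟨congrFun hr 0, congrFun hr 2, congrFun hr 3⟩
  obtain ⟨r0', r2', r3'⟩ : _ ∧ _ ∧ _ := ⟨congrFun hr' 0, congrFun hr' 2, congrFun hr' 3⟩
  obtain ⟨s2, s3, s2', s3'⟩ : _ ∧ _ ∧ _ ∧ _ :=
    ⟨congrFun hs 2, congrFun hs 3, congrFun hs' 2, congrFun hs' 3⟩
  simp [Cmat, mulVec, dotProduct, Fin.sum_univ_four] at r0 r2 r3 r0' r2' r3' s2 s3 s2' s3'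
  have hv : v' = v := by
    have : a * b * (v' - v) = 0 := by
      linear_combination (-S / 2) * (r0' - r0) - b / 2 * (r2' - r2) - a / 2 * (r3' - r3)
    simpa [ha, hb, sub_eq_zero] using this
  subst hv
  have h0 : c' 0 = c 0 := mul_right_cancel₀ hS (by linear_combination r2' - r2)
  have h1 : c' 1 = c 1 := mul_right_cancel₀ hS (by linear_combination r3' - r3)
  have h2 : c' 2 = c 2 := mul_right_cancel₀ hS (by linear_combination s2' - s2)
  have h3 : c' 3 = c 3 := mul_right_cancel₀ hS (by linear_combination s3' - s3)
  ext i
  fin_cases i <;> assumption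

lemma Matrix.PosSemidef.le_one_and_mulVec_eq_zero {n : Type*} [Fintype n] {M : Matrix n n ℝ}
    (hM : M.PosSemidef) {r s : n → ℝ} {x y z F : ℝ} (hx : x < 0) (hy : 0 < y) (hz : z < 0)
    (h : x * (r ⬝ᵥ M *ᵥ r) - y * (s ⬝ᵥ M *ᵥ s) = z * (1 - F)) :
    F ≤ 1 ∧ (F = 1 → M *ᵥ r = 0 ∧ M *ᵥ s = 0) := by
  have hr := hM.dotProduct_mulVec_nonneg r
  have hs := hM.dotProduct_mulVec_nonneg s
  simp only [star_trivial] at hr hs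
  have hxr := mul_nonpos_of_nonpos_of_nonneg hx.le hr
  have hys := mul_nonneg hy.le hs
  refine ⟨sub_nonneg.mp <| nonneg_of_mul_nonpos_right (by linarith) hz, fun hF => ?_⟩
  rw [hF, sub_self, mul_zero] at h
  have hr0 : r ⬝ᵥ M *ᵥ r = 0 := by nlinarith
  have hs0 : s ⬝ᵥ M *ᵥ s = 0 := by nlinarith
  exact ⟨(hM.dotProduct_mulVec_zero_iff r).mp hr0, (hM.dotProduct_mulVec_zero_iff s).mp hs0⟩

lemma mul_pos_and_mul_neg_of_sub_eq {p q A B K : ℝ} (hp : 0 < p) (hq : 0 < q) (hAB : A * B < 0)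
    (h : p * B - q * A = 2 * K * (A * B)) : 0 < K * A ∧ K * B < 0 := by
  rcases lt_or_gt_of_ne (left_ne_zero_of_mul hAB.ne) with hA | hA
  · have hB : 0 < B := pos_of_mul_neg_right hAB hA.le
    have hK : K < 0 := by nlinarith
    exact ⟨mul_pos_of_neg_of_neg hK hA, mul_neg_of_neg_of_pos hK hB⟩
  · have hB : B < 0 := neg_of_mul_neg_right hAB hA.le
    have hK : 0 < K := by nlinarith
    exact ⟨mul_pos hK hA, mul_neg_of_pos_of_neg hK hB⟩

lemma mul_pos_and_mul_neg_of_Cmat_mulVec_eq_zero {c : Fin 4 → ℝ} {u₀ v₀ a b g d S K : ℝ}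
    (hr : Cmat c u₀ v₀ *ᵥ ![S, 0, -b, -a] = 0) (hs : Cmat c u₀ v₀ *ᵥ ![0, S, d, g] = 0)
    (hP : a * b * g * d < 0) (hS : S ≠ 0)
    (hK : a * b * g * d * K =
      b * g * d * c 0 + a * g * d * c 1 + a * b * d * c 2 + a * b * g * c 3) :
    0 < K * (S * a * b) ∧ K * (S * g * d) < 0 := by
  have hconst := Cmat_quadForm_combination c u₀ v₀ a b g d S
  rw [hr, hs, dotProduct_zero, dotProduct_zero] at hconst
  refine mul_pos_and_mul_neg_of_sub_eq (p := S ^ 2 + a ^ 2 + b ^ 2) (q := S ^ 2 + g ^ 2 + d ^ 2)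
    (by positivity) (by positivity) ?_ (by linear_combination -S * hconst - 2 * S ^ 2 * hK)
  have : 0 < S ^ 2 := by positivity
  nlinarith

theorem exposesPoint_of_Cmat_mulVec_eq_zero {c : Fin 4 → ℝ} {u₀ v₀ a b g d S K : ℝ}
    (hr : Cmat c u₀ v₀ *ᵥ ![S, 0, -b, -a] = 0) (hs : Cmat c u₀ v₀ *ᵥ ![0, S, d, g] = 0)
    (hP : a * b * g * d < 0) (hS : S ≠ 0) (hK : K = c 0 / a + c 1 / b + c 2 / g + c 3 / d) :
    ExposesPoint Qbody ((1 / K) • ![a⁻¹, b⁻¹, g⁻¹, d⁻¹]) c := by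
  obtain ⟨ha, hb, hg, hd⟩ : a ≠ 0 ∧ b ≠ 0 ∧ g ≠ 0 ∧ d ≠ 0 := by simpa [and_assoc] using hP.ne
  have hPK : a * b * g * d * K =
      b * g * d * c 0 + a * g * d * c 1 + a * b * d * c 2 + a * b * g * c 3 := by
    rw [hK]; field_simp
  obtain ⟨hKab, hKgd⟩ := mul_pos_and_mul_neg_of_Cmat_mulVec_eq_zero hr hs hP hS hPK
  have hK0 : K ≠ 0 := by rintro rfl; simp at hKab
  set f : Fin 4 → ℝ := (1 / K) • ![a⁻¹, b⁻¹, g⁻¹, d⁻¹]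
  have hf (c' : Fin 4 → ℝ) : K * (a * b * g * d) * ∑ i, f i * c' i =
      b * g * d * c' 0 + a * g * d * c' 1 + a * b * d * c' 2 + a * b * g * c' 3 := by
    simp [f, Fin.sum_univ_four]; field_simp
  have hc := Cmat_quadForm_combination c u₀ v₀ a b g d S
  rw [hr, hs, dotProduct_zero, dotProduct_zero] at hc
  have key (c' : Fin 4 → ℝ) (u v : ℝ) :
      K * (S * g * d) * (![S, 0, -b, -a] ⬝ᵥ Cmat c' u v *ᵥ ![S, 0, -b, -a]) -
        K * (S * a * b) * (![0, S, d, g] ⬝ᵥ Cmat c' u v *ᵥ ![0, S, d, g]) =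
      2 * S ^ 2 * K ^ 2 * (a * b * g * d) * (1 - ∑ i, f i * c' i) := by
    linear_combination K * S * Cmat_quadForm_combination c' u v a b g d S - K * S * hc
      + 2 * S ^ 2 * K * hf c' - 2 * S ^ 2 * K * hPK
  have hcoef : 2 * S ^ 2 * K ^ 2 * (a * b * g * d) < 0 :=
    mul_neg_of_pos_of_neg (by positivity) hP
  have hle : ∀ c' ∈ Qbody, ∑ i, f i * c' i ≤ 1 ∧ (∑ i, f i * c' i = 1 → c' = c) := by
    rintro c' ⟨u, v, hC⟩
    obtain ⟨hle, heq⟩ := hC.le_one_and_mulVec_eq_zero hKgd hKab hcoef (key c' u v)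
    refine ⟨hle, fun h1 => ?_⟩
    obtain ⟨hr', hs'⟩ := heq h1
    exact eq_of_Cmat_mulVec_eq_zero ha hb hS hr hr' hs hs'
  have hfc : ∑ i, f i * c i = 1 :=
    mul_left_cancel₀ (mul_ne_zero hK0 hP.ne) (by linear_combination hf c - hPK)
  exact ⟨fun c' hc' => (hle c' hc').1, fun c' hc' => ⟨(hle c' hc').2, by rintro rfl; exact hfc⟩⟩

section
variable {ι : Type*} [Fintype ι]

lemma eq_of_forall_sum_mul_eq_zero {x : ι → ℝ} (h : ∀ w : ι → ℝ, ∑ i, w i = 0 → ∑ i, x i * w i = 0)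
    (i j : ι) : x i = x j := by
  classical
  have := h (Pi.single i 1 - Pi.single j 1) (by simp)
  simpa [mul_sub, Finset.sum_sub_distrib, sub_eq_zero, Pi.single_apply] using this

variable {Q : Set (ι → ℝ)}

lemma sum_mul_sin_mul_eq_zero (hQ : ∀ θ : ι → ℝ, ∑ i, θ i = 0 → (fun i => cos (θ i)) ∈ Q)
    {θ f : ι → ℝ} (hθ : ∑ i, θ i = 0)
    (hf : ExposesPoint Q f (fun i => cos (θ i))) {w : ι → ℝ} (hw : ∑ i, w i = 0) :
    ∑ i, f i * sin (θ i) * w i = 0 := by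
  have hmax : IsLocalMax (fun t => ∑ i, f i * cos (θ i + t * w i)) 0 :=
    Filter.Eventually.of_forall fun t => by
      simp only [zero_mul, add_zero, (hf.2 _ (hQ θ hθ)).2 rfl]
      exact hf.1 _ (hQ _ (by simp [Finset.sum_add_distrib, hθ, ← Finset.mul_sum, hw]))
  have hderiv : HasDerivAt (fun t => ∑ i, f i * cos (θ i + t * w i))
      (∑ i, f i * (-sin (θ i + 0 * w i) * (1 * w i))) 0 :=
    HasDerivAt.fun_sum fun i _ =>
      ((((hasDerivAt_id (0 : ℝ)).mul_const (w i)).const_add (θ i)).cos).const_mul (f i)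
  simpa [mul_assoc] using hmax.hasDerivAt_eq_zero hderiv

theorem eq_smul_inv_sin_of_exposesPoint
    (hQ : ∀ θ : ι → ℝ, ∑ i, θ i = 0 → (fun i => cos (θ i)) ∈ Q) {θ f : ι → ℝ} (hθ : ∑ i, θ i = 0)
    (hsin : ∀ i, sin (θ i) ≠ 0) (hf : ExposesPoint Q f (fun i => cos (θ i))) :
    f = (1 / ∑ i, cos (θ i) / sin (θ i)) • fun i => (sin (θ i))⁻¹ := by
  have hconst : ∀ i j, f i * sin (θ i) = f j * sin (θ j) :=
    eq_of_forall_sum_mul_eq_zero fun w hw => sum_mul_sin_mul_eq_zero hQ hθ hf hw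
  ext i
  set l := f i * sin (θ i)
  have hfj (j : ι) : f j = l / sin (θ j) := by rw [eq_div_iff (hsin j), hconst j i]
  have hl : l * ∑ j, cos (θ j) / sin (θ j) = 1 := by
    rw [← (hf.2 _ (hQ θ hθ)).2 rfl, Finset.mul_sum]
    exact Finset.sum_congr rfl fun j _ => by rw [hfj j]; ring
  rw [Pi.smul_apply, smul_eq_mul, hfj i, ← hl]
  field_simp [right_ne_zero_of_mul_eq_one hl]
end

lemma cos_comp_mem_Qbody (θ : Fin 4 → ℝ) (h : ∑ i, θ i = 0) : (fun i => cos (θ i)) ∈ Qbody := by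
  convert cos_mem_Qbody (α := θ 0) (β := θ 1) (γ := θ 2) (δ := θ 3)
    (by simpa [Fin.sum_univ_four, add_assoc] using h) using 1
  ext i
  fin_cases i <;> rfl

theorem stmt9 (α β γ δ : ℝ) (hsum : α + β + γ + δ = 0)
    (hneg : Real.sin α * Real.sin β * Real.sin γ * Real.sin δ < 0)
    (c : Fin 4 → ℝ) (hc : c = ![Real.cos α, Real.cos β, Real.cos γ, Real.cos δ])
    (K : ℝ) (hK : K = Real.cos α / Real.sin α + Real.cos β / Real.sin β +
      Real.cos γ / Real.sin γ + Real.cos δ / Real.sin δ)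
    (f : Fin 4 → ℝ)
    (hf : f = (1 / K) • ![(Real.sin α)⁻¹, (Real.sin β)⁻¹, (Real.sin γ)⁻¹, (Real.sin δ)⁻¹]) :
    (∀ c' ∈ Qbody, ∑ i, f i * c' i ≤ 1) ∧
    (∀ c' ∈ Qbody, (∑ i, f i * c' i = 1 ↔ c' = c)) ∧
    (∀ f' : Fin 4 → ℝ,
      ((∀ c' ∈ Qbody, ∑ i, f' i * c' i ≤ 1) ∧
        (∀ c' ∈ Qbody, (∑ i, f' i * c' i = 1 ↔ c' = c))) → f' = f) := by
  have hexp : ExposesPoint Qbody f c := by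
    subst hc hf
    refine exposesPoint_of_Cmat_mulVec_eq_zero (u₀ := cos (α + γ)) (v₀ := cos (α + β)) ?_ ?_
      hneg (sin_add_ne_zero hsum hneg) hK
    · rw [Cmat_cos_eq_transpose_mul hsum, ← mulVec_mulVec, cosGramFactor_mulVec_left, mulVec_zero]
    · rw [Cmat_cos_eq_transpose_mul hsum, ← mulVec_mulVec, cosGramFactor_mulVec_right hsum,
        mulVec_zero]
  refine ⟨hexp.1, hexp.2, fun f' hf' => ?_⟩
  set θ : Fin 4 → ℝ := ![α, β, γ, δ]
  have hθc : c = fun i => cos (θ i) := by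
    subst hc
    ext i
    fin_cases i <;> rfl
  have hsin : ∀ i, sin (θ i) ≠ 0 := by
    have := hneg.ne
    simp only [ne_eq, mul_eq_zero, not_or] at this
    intro i
    fin_cases i <;> simp [θ, this]
  rw [hθc] at hf'
  rw [eq_smul_inv_sin_of_exposesPoint cos_comp_mem_Qbody (by simp [θ, Fin.sum_univ_four, hsum])
    hsin hf', hf, hK]
  ext i
  fin_cases i <;> simp [θ, Fin.sum_univ_four]
end

section
/- A point c ∈ Q lies in the interior of Q if and only if there exist u,v ∈ ℝ such that the matrix C(c,u,v) is positive semidefinite of rank 4 (equivalently, positive definite). -/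
open Matrix
open scoped ComplexOrder

namespace Matrix

variable {n 𝕜 : Type*} [Fintype n] [DecidableEq n] [RCLike 𝕜]

theorem isUnit_of_rank_eq_card {K : Type*} [Field K] {A : Matrix n n K}
    (hA : A.rank = Fintype.card n) : IsUnit A := by
  rw [← mulVec_surjective_iff_isUnit, ← coe_mulVecLin, ← LinearMap.range_eq_top]
  exact Submodule.eq_top_of_finrank_eq (by rw [← rank, hA, Module.finrank_fintype_fun_eq_card])

theorem posDef_iff_posSemidef_and_rank_eq_card {A : Matrix n n 𝕜} :
    A.PosDef ↔ A.PosSemidef ∧ A.rank = Fintype.card n :=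
  ⟨fun hA => ⟨hA.posSemidef, rank_of_isUnit A hA.isUnit⟩,
    fun ⟨hA, hr⟩ => hA.posDef_iff_isUnit.mpr (isUnit_of_rank_eq_card hr)⟩

open scoped MatrixOrder in
theorem PosDef.exists_posSemidef_sub_smul_one [Nonempty n] {A : Matrix n n 𝕜} (hA : A.PosDef) :
    ∃ ε : ℝ, 0 < ε ∧ (A - ε • 1).PosSemidef := by
  obtain ⟨ε, hε, hεA⟩ := (CFC.exists_pos_algebraMap_le_iff hA.isHermitian).2
    fun x hx => hA.isStrictlyPositive.spectrum_pos hx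
  rw [Algebra.algebraMap_eq_smul_one] at hεA
  exact ⟨ε, hε, hεA⟩

end Matrix

theorem exists_one_lt_smul_mem_of_mem_interior {E : Type*} [TopologicalSpace E]
    [AddCommMonoid E] [Module ℝ E] [ContinuousSMul ℝ E] {S : Set E} {x : E}
    (hx : x ∈ interior S) : ∃ r : ℝ, 1 < r ∧ r • x ∈ S := by
  have hcont : ContinuousAt (fun r : ℝ => r • x) 1 := by fun_prop
  have hnhds : ∀ᶠ r in nhds (1 : ℝ), r • x ∈ S :=
    hcont.eventually (by simpa using mem_interior_iff_mem_nhds.mp hx)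
  obtain ⟨r, hrS, hr⟩ :=
    ((hnhds.filter_mono (nhdsWithin_le_nhds (s := Set.Ioi 1))).and self_mem_nhdsWithin).exists
  exact ⟨r, hr, hrS⟩

theorem isHermitian_Cmat (c : Fin 4 → ℝ) (u v : ℝ) : (Cmat c u v).IsHermitian := by
  ext i j
  fin_cases i <;> fin_cases j <;> rfl

theorem posSemidef_Cmat_zero_zero {d : Fin 4 → ℝ} (hd : ∀ i, |d i| ≤ 1 / 2) :
    (Cmat d 0 0).PosSemidef := by
  have hpair : ∀ {e : ℝ}, |e| ≤ 1 / 2 → ∀ a b : ℝ, 0 ≤ (a ^ 2 + b ^ 2) / 2 + 2 * e * a * b := by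
    intro e he a b
    have := abs_le.mp he
    nlinarith [sq_nonneg (a + b), sq_nonneg (a - b)]
  refine posSemidef_iff_dotProduct_mulVec.mpr ⟨isHermitian_Cmat d 0 0, fun x => ?_⟩
  simp only [dotProduct, Pi.star_apply, star_trivial, mulVec, Cmat, Fin.isValue, of_apply,
    cons_val', cons_val_fin_one, Fin.sum_univ_four, cons_val_zero, cons_val_one, cons_val, one_mul,
    zero_mul, add_zero, zero_add]
  linarith [hpair (hd 0) (x 0) (x 2), hpair (hd 1) (x 0) (x 3), hpair (hd 2) (x 1) (x 2),
    hpair (hd 3) (x 1) (x 3)]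

theorem Cmat_smul (c : Fin 4 → ℝ) (u v s : ℝ) :
    Cmat (s • c) (s * u) (s * v) = (1 - s) • 1 + s • Cmat c u v := by
  ext i j
  fin_cases i <;> fin_cases j <;> simp [Cmat, one_apply]

theorem Cmat_add_smul (c d : Fin 4 → ℝ) (u v ε : ℝ) :
    Cmat (c + ε • d) u v = (Cmat c u v - ε • 1) + ε • Cmat d 0 0 := by
  ext i j
  fin_cases i <;> fin_cases j <;> simp [Cmat, one_apply]

theorem exists_posDef_Cmat_smul {c : Fin 4 → ℝ} (hc : c ∈ Qbody) {s : ℝ} (hs₀ : 0 ≤ s)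
    (hs₁ : s < 1) : ∃ u v : ℝ, (Cmat (s • c) u v).PosDef := by
  obtain ⟨u, v, huv⟩ := hc
  refine ⟨s * u, s * v, ?_⟩
  rw [Cmat_smul]
  exact (PosDef.one.smul (sub_pos.mpr hs₁)).add_posSemidef (huv.smul hs₀)

theorem mem_interior_Qbody_of_posDef {c : Fin 4 → ℝ} {u v : ℝ} (h : (Cmat c u v).PosDef) :
    c ∈ interior Qbody := by
  obtain ⟨ε, hε, hsub⟩ := h.exists_posSemidef_sub_smul_one
  refine mem_interior_iff_mem_nhds.mpr (Metric.mem_nhds_iff.mpr ⟨ε / 2, by positivity, ?_⟩)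
  intro c' hc'
  set d := ε⁻¹ • (c' - c)
  have hc'd : c' = c + ε • d := by simp [d, smul_smul, hε.ne']
  have hd : ∀ i, |d i| ≤ 1 / 2 := by
    intro i
    have hi : |c' i - c i| ≤ ε / 2 := by
      simpa [Real.dist_eq] using ((dist_le_pi_dist c' c i).trans_lt hc').le
    have hdi : d i = (c' i - c i) / ε := by simp [d, div_eq_inv_mul]
    rw [hdi, abs_div, abs_of_pos hε, div_le_iff₀ hε]
    linarith
  refine ⟨u, v, ?_⟩
  rw [hc'd, Cmat_add_smul]
  exact hsub.add ((posSemidef_Cmat_zero_zero hd).smul hε.le)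

theorem stmt11_general (c : Fin 4 → ℝ) :
    c ∈ interior Qbody ↔
      ∃ u v : ℝ, (Cmat c u v).PosSemidef ∧ (Cmat c u v).rank = 4 := by
  have hpd : ∀ u v, (Cmat c u v).PosSemidef ∧ (Cmat c u v).rank = 4 ↔ (Cmat c u v).PosDef :=
    fun u v => by rw [posDef_iff_posSemidef_and_rank_eq_card, Fintype.card_fin]
  simp only [hpd]
  constructor
  · intro hc
    obtain ⟨r, hr, hrc⟩ := exists_one_lt_smul_mem_of_mem_interior hc
    have hr₀ : r ≠ 0 := by positivity
    simpa [smul_smul, hr₀] using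
      exists_posDef_Cmat_smul hrc (by positivity) (inv_lt_one_of_one_lt₀ hr)
  · rintro ⟨u, v, h⟩
    exact mem_interior_Qbody_of_posDef h

theorem stmt11 (c : Fin 4 → ℝ) (hc : c ∈ Qbody) :
    c ∈ interior Qbody ↔
      ∃ u v : ℝ, (Cmat c u v).PosSemidef ∧ (Cmat c u v).rank = 4 :=
  stmt11_general c
end
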